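/- arXiv:2104.11676 — 8 statements merged into one kernel-verified Lean document; each statement's English description precedes it below -/
import Mathlib

section
/- (Proposition: a sure winning state is deceptively sure winning.) Let G be a reachability game with inference mechanism η. If s ∈ Win1(A1), then for every initial perception X0 ⊆ A1 there exists a memoryless P1 strategy π : V1 → A1 in the hypergame H such that every infinite play from (s, X0) consistent with π against permissive P2 behavior visits the hypergame final states 𝓕; i.e., (s, X0) is a deceptively sure winning state of P1. -/
/-!
Reachability games with one-sided incomplete information of action sets
(Kulkarni & Fu, "Synthesis of Deceptive Strategies in Reachability Games
with Action Misperception").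

Encoding: the game `G = (S, S1, S2, A1, A2, T, F)` is modeled with
* a type `S` of states, `S1 = {s | G.isP1 s}`, `S2` its complement,
* a type `A` for P1's full action set `A1` and a type `B` for P2's action
  set `A2` (disjointness is automatic), so a perception of P1's action set
  is a subset `X : Set A` and the full perception `A1` is `Set.univ`,
* transition functions `T1 : S → A → S` and `T2 : S → B → S`,
* final states `F : Set S`.
-/

structure RGame (S A B : Type) where
  isP1 : S → Prop
  T1 : S → A → S
  T2 : S → B → S
  F : Set S

namespace RGame

variable {S A B : Type}

/-- The attractor iterates `Z_k(X)` for P1 under perception `X ⊆ A1`: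
`Z_0(X) = F` and
`Z_{k+1}(X) = Z_k(X) ∪ {s ∈ S1 | ∃ a ∈ X, T(s,a) ∈ Z_k(X)} ∪ {s ∈ S2 | ∀ b ∈ A2, T(s,b) ∈ Z_k(X)}`. -/
def attr (G : RGame S A B) (X : Set A) : ℕ → Set S
  | 0 => G.F
  | k + 1 =>
      attr G X k ∪
        {s | G.isP1 s ∧ ∃ a ∈ X, G.T1 s a ∈ attr G X k} ∪
        {s | ¬ G.isP1 s ∧ ∀ b : B, G.T2 s b ∈ attr G X k}

/-- P1's sure winning region under perception `X`: `Win1(X) = ⋃ k, Z_k(X)`. -/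
def Win1 (G : RGame S A B) (X : Set A) : Set S := ⋃ k, G.attr X k

/-- P2's winning region under perception `X`: `Win2(X) = S \ Win1(X)`. -/
def Win2 (G : RGame S A B) (X : Set A) : Set S := (G.Win1 X)ᶜ

/-- Perceptually permissive actions of P2 at `s` under perception `X`:
`M_X(s) = {b ∈ A2 | T(s,b) ∈ Win2(X)}`. -/
def Mperm (G : RGame S A B) (X : Set A) (s : S) : Set B :=
  {b | G.T2 s b ∈ G.Win2 X}

/-- Hypergame transition on `V = S × 2^{A1}` for a P1 action:
`Δ((s,X), a) = (T(s,a), η(X,a))`. -/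
def delta1 (G : RGame S A B) (η : Set A → A → Set A) (v : S × Set A) (a : A) :
    S × Set A :=
  (G.T1 v.1 a, η v.2 a)

/-- Hypergame transition on `V = S × 2^{A1}` for a P2 action:
`Δ((s,X), b) = (T(s,b), X)`. -/
def delta2 (G : RGame S A B) (v : S × Set A) (b : B) : S × Set A :=
  (G.T2 v.1 b, v.2)

/-- Perceptually permissive actions at a hypergame state `v = (s, X)`:
`M(v) = M_X(s)`. -/
def M (G : RGame S A B) (v : S × Set A) : Set B := G.Mperm v.2 v.1

/-- Final states are absorbing: every action from a final state leads
to a final state. -/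
def Absorbing (G : RGame S A B) : Prop :=
  ∀ s ∈ G.F, (∀ a : A, G.T1 s a ∈ G.F) ∧ (∀ b : B, G.T2 s b ∈ G.F)

/-- `DPre1(U) = {v ∈ V1 | ∃ a ∈ A1, Δ(v,a) ∈ U}` (also `DAPre1^1`). -/
def DPre1 (G : RGame S A B) (η : Set A → A → Set A) (U : Set (S × Set A)) :
    Set (S × Set A) :=
  {v | G.isP1 v.1 ∧ ∃ a : A, G.delta1 η v a ∈ U}

/-- `DPre2(U) = {v ∈ V2 | ∀ b ∈ M(v), Δ(v,b) ∈ U}` (also `DAPre^2`). -/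
def DPre2 (G : RGame S A B) (U : Set (S × Set A)) : Set (S × Set A) :=
  {v | ¬ G.isP1 v.1 ∧ ∀ b ∈ G.M v, G.delta2 v b ∈ U}

/-- `DAPre2^1(U) = {v ∈ V1 | ∀ a ∈ A1, Δ(v,a) ∈ U}`. -/
def DAPre21 (G : RGame S A B) (η : Set A → A → Set A) (U : Set (S × Set A)) :
    Set (S × Set A) :=
  {v | G.isP1 v.1 ∧ ∀ a : A, G.delta1 η v a ∈ U}

/-- The deceptive sure-winning iteration:
`W_0 = Win1(A1) × 2^{A1}`, `W_{k+1} = W_k ∪ DPre1(W_k) ∪ DPre2(W_k)`. -/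
def DSWiter (G : RGame S A B) (η : Set A → A → Set A) : ℕ → Set (S × Set A)
  | 0 => {v | v.1 ∈ G.Win1 Set.univ}
  | k + 1 =>
      DSWiter G η k ∪ G.DPre1 η (DSWiter G η k) ∪ G.DPre2 (DSWiter G η k)

/-- The deceptive sure winning region `DSWin1`, the least fixed point of the
`DSWiter` iteration. -/
def DSWin1 (G : RGame S A B) (η : Set A → A → Set A) : Set (S × Set A) :=
  ⋃ k, G.DSWiter η k

/-- `Safe1(U)`: the greatest `Y ⊆ U` with `Y ⊆ DAPre1^1(Y) ∪ DAPre^2(Y)`,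
realized as the union of all post-fixed points. -/
def Safe1 (G : RGame S A B) (η : Set A → A → Set A) (U : Set (S × Set A)) :
    Set (S × Set A) :=
  ⋃₀ {Y | Y ⊆ U ∧ Y ⊆ G.DPre1 η Y ∪ G.DPre2 Y}

/-- `Safe2(U)`: the greatest `Y ⊆ U` with `Y ⊆ DAPre2^1(Y) ∪ DAPre^2(Y)`,
realized as the union of all post-fixed points. -/
def Safe2 (G : RGame S A B) (η : Set A → A → Set A) (U : Set (S × Set A)) :
    Set (S × Set A) :=
  ⋃₀ {Y | Y ⊆ U ∧ Y ⊆ G.DAPre21 η Y ∪ G.DPre2 Y}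

/-- The DASW iterates: `Z_0 = Win1(A1) × 2^{A1}` and
`Z_{k+1} = Safe1(V \ C_k)` where `C_k = Safe2(V \ Z_k)`. -/
def Zda (G : RGame S A B) (η : Set A → A → Set A) : ℕ → Set (S × Set A)
  | 0 => {v | v.1 ∈ G.Win1 Set.univ}
  | k + 1 => G.Safe1 η (G.Safe2 η (Zda G η k)ᶜ)ᶜ

/-- `C_k = Safe2(V \ Z_k)`, the region in which P2 can enforce the play to stay. -/
def Cda (G : RGame S A B) (η : Set A → A → Set A) (k : ℕ) : Set (S × Set A) :=
  G.Safe2 η (G.Zda η k)ᶜ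

/-- The deceptive almost-sure winning region: `DAWin1 = ⋃ k, Z_k`. -/
def DAWin1 (G : RGame S A B) (η : Set A → A → Set A) : Set (S × Set A) :=
  ⋃ k, G.Zda η k

/-- One step `v → v'` of a play consistent with a memoryless P1 strategy `π`
against perceptually permissive P2 behavior: at a P1 state, P1 plays `π(v)`;
at a P2 state, P2 plays some `b ∈ M(v)` when `M(v) ≠ ∅`, and an arbitrary
`b ∈ A2` otherwise. -/
def ConsStep (G : RGame S A B) (η : Set A → A → Set A) (π : S × Set A → A)
    (v v' : S × Set A) : Prop :=
  (G.isP1 v.1 ∧ v' = G.delta1 η v (π v)) ∨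
    (¬ G.isP1 v.1 ∧ ∃ b : B, ((G.M v).Nonempty → b ∈ G.M v) ∧ v' = G.delta2 v b)

end RGame
/-- **Proposition: a sure winning state is deceptively sure
winning.** If `s ∈ Win1(A1)`, then for every initial perception `X0 ⊆ A1`
there is a memoryless P1 strategy `π` in the hypergame such that every
infinite play from `(s, X0)` consistent with `π` against permissive P2
behavior visits the hypergame final states `𝓕 = F × 2^{A1}`. -/
theorem sure_winning_implies_deceptively_sure_winning
    (S A B : Type) [Fintype S] [Fintype A] [Fintype B] [Nonempty A] [Nonempty B]
    (G : RGame S A B) (η : Set A → A → Set A)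
    (hη : ∀ (X : Set A) (a : A), a ∈ η X a)
    (s : S) (hs : s ∈ G.Win1 Set.univ) (X0 : Set A) :
    ∃ π : S × Set A → A,
      ∀ ρ : ℕ → S × Set A, ρ 0 = (s, X0) →
        (∀ i : ℕ, G.ConsStep η π (ρ i) (ρ (i + 1))) →
        ∃ n : ℕ, (ρ n).1 ∈ G.F := by
  classical
  let rnk : S → ℕ := fun t => sInf {k | t ∈ G.attr Set.univ k}
  let π : S × Set A → A := fun v =>
    if h : ∃ a, G.T1 v.1 a ∈ G.attr Set.univ (rnk v.1 - 1) then h.choose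
    else Classical.arbitrary A
  refine ⟨π, fun ρ h0 hstep => ?_⟩
  obtain ⟨k0, hk0⟩ := Set.mem_iUnion.mp hs
  have main : ∀ k, ∀ i, (ρ i).1 ∈ G.attr Set.univ k → ∃ n, (ρ n).1 ∈ G.F := by
    intro k
    induction k using Nat.strong_induction_on with
    | _ k ih =>
      intro i hi
      have hne : {j | (ρ i).1 ∈ G.attr Set.univ j}.Nonempty := ⟨k, hi⟩
      have hmem : (ρ i).1 ∈ G.attr Set.univ (rnk (ρ i).1) := Nat.sInf_mem hne
      have hle : rnk (ρ i).1 ≤ k := Nat.sInf_le hi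
      rcases Nat.eq_zero_or_pos (rnk (ρ i).1) with hr | hr
      · rw [hr] at hmem
        exact ⟨i, hmem⟩
      · obtain ⟨m, hm⟩ : ∃ m, rnk (ρ i).1 = m + 1 :=
          ⟨rnk (ρ i).1 - 1, (Nat.succ_pred_eq_of_pos hr).symm⟩
        have hmk : m < k := lt_of_lt_of_le (by omega) hle
        have hm' : sInf {j | (ρ i).1 ∈ G.attr Set.univ j} = m + 1 := hm
        have hnot : (ρ i).1 ∉ G.attr Set.univ m := fun hc => by
          have := Nat.sInf_le (s := {j | (ρ i).1 ∈ G.attr Set.univ j}) hc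
          omega
        rw [hm] at hmem
        rcases hmem with (hatt | ⟨hP1, a, _, ha⟩) | ⟨hP2, hall⟩
        · exact absurd hatt hnot
        · -- P1 state
          have hex : ∃ a, G.T1 (ρ i).1 a ∈ G.attr Set.univ (rnk (ρ i).1 - 1) := by
            rw [hm]; exact ⟨a, ha⟩
          have hsub : rnk (ρ i).1 - 1 = m := by omega
          have hch : G.T1 (ρ i).1 (π (ρ i)) ∈ G.attr Set.univ m := by
            rw [← hsub]
            simp only [π, dif_pos hex]
            exact hex.choose_spec
          rcases hstep i with ⟨_, hv'⟩ | ⟨hnp, _⟩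
          · have : (ρ (i + 1)).1 ∈ G.attr Set.univ m := by
              rw [hv']; exact hch
            exact ih m hmk (i + 1) this
          · exact absurd hP1 hnp
        · -- P2 state
          rcases hstep i with ⟨hp, _⟩ | ⟨_, b, _, hv'⟩
          · exact absurd hp hP2
          · have : (ρ (i + 1)).1 ∈ G.attr Set.univ m := by
              rw [hv']; exact hall b
            exact ih m hmk (i + 1) this
  exact main k0 0 (by rw [h0]; exact hk0)
end

section
/- (Theorem: deception yields no advantage under the sure-winning condition.) Let G be a reachability game with inference mechanism η. Then the deceptive sure winning region satisfies DSWin1 = Win1(A1) × 2^{A1}. Consequently, the projection of DSWin1 onto the game state space S equals Win1(A1), the non-deceptive sure winning region of P1. -/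
namespace RGame

variable {S A B : Type}

lemma attr_mono (G : RGame S A B) (X : Set A) : Monotone (G.attr X) := by
  apply monotone_nat_of_le_succ
  intro k s hs
  exact Or.inl (Or.inl hs)

lemma attr_subset_univ (G : RGame S A B) (X : Set A) (k : ℕ) :
    G.attr X k ⊆ G.attr Set.univ k := by
  induction k with
  | zero => exact le_rfl
  | succ k ih =>
    rintro s ((h | ⟨h1, a, _, ha⟩) | ⟨h1, h2⟩)
    · exact Or.inl (Or.inl (ih h))
    · exact Or.inl (Or.inr ⟨h1, a, trivial, ih ha⟩)
    · exact Or.inr ⟨h1, fun b => ih (h2 b)⟩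

lemma win1_subset_univ (G : RGame S A B) (X : Set A) :
    G.Win1 X ⊆ G.Win1 Set.univ := by
  intro s hs
  rcases Set.mem_iUnion.mp hs with ⟨k, hk⟩
  exact Set.mem_iUnion.mpr ⟨k, G.attr_subset_univ X k hk⟩

lemma win1_of_all_succ [Fintype B] (G : RGame S A B) {s : S} (hs : ¬ G.isP1 s)
    (h : ∀ b : B, G.T2 s b ∈ G.Win1 Set.univ) : s ∈ G.Win1 Set.univ := by
  choose f hf using fun b => Set.mem_iUnion.mp (h b)
  refine Set.mem_iUnion.mpr ⟨Finset.univ.sup f + 1, Or.inr ⟨hs, fun b => ?_⟩⟩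
  exact G.attr_mono Set.univ (Finset.le_sup (Finset.mem_univ b)) (hf b)

end RGame

/-- **Theorem 1: deception yields no advantage under the
sure-winning condition.** `DSWin1 = Win1(A1) × 2^{A1}`; consequently the
projection of `DSWin1` onto the game state space equals `Win1(A1)`. -/
theorem dswin_eq_win1
    (S A B : Type) [Fintype S] [Fintype A] [Fintype B] [Nonempty A] [Nonempty B]
    (G : RGame S A B) (η : Set A → A → Set A)
    (hη : ∀ (X : Set A) (a : A), a ∈ η X a) :
    G.DSWin1 η = {v : S × Set A | v.1 ∈ G.Win1 Set.univ} ∧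
      Prod.fst '' G.DSWin1 η = G.Win1 Set.univ := by
  have hiter : ∀ k, G.DSWiter η k = {v : S × Set A | v.1 ∈ G.Win1 Set.univ} := by
    intro k
    induction k with
    | zero => rfl
    | succ k ih =>
      show G.DSWiter η k ∪ G.DPre1 η (G.DSWiter η k) ∪ G.DPre2 (G.DSWiter η k) = _
      rw [ih]
      apply Set.Subset.antisymm
      · rintro ⟨s, X⟩ ((h | ⟨h1, a, ha⟩) | ⟨h1, h2⟩)
        · exact h
        · -- P1 state with an action into Win1
          rcases Set.mem_iUnion.mp ha with ⟨m, hm⟩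
          exact Set.mem_iUnion.mpr ⟨m + 1, Or.inl (Or.inr ⟨h1, a, trivial, hm⟩)⟩
        · -- P2 state: all actions lead to Win1
          refine G.win1_of_all_succ h1 (fun b => ?_)
          by_cases hb : G.T2 s b ∈ G.Win1 X
          · exact G.win1_subset_univ X hb
          · exact h2 b hb
      · intro v hv
        exact Or.inl (Or.inl hv)
  have h1 : G.DSWin1 η = {v : S × Set A | v.1 ∈ G.Win1 Set.univ} := by
    apply Set.Subset.antisymm
    · intro v hv
      rcases Set.mem_iUnion.mp hv with ⟨k, hk⟩
      rw [hiter k] at hk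
      exact hk
    · intro v hv
      exact Set.mem_iUnion.mpr ⟨0, by rw [hiter 0]; exact hv⟩
  refine ⟨h1, ?_⟩
  rw [h1]
  ext s
  constructor
  · rintro ⟨⟨s', X⟩, hs', rfl⟩
    exact hs'
  · intro hs
    exact ⟨(s, (∅ : Set A)), hs, rfl⟩
end

section
/- (Case II of the sure-winning equivalence theorem.) Let G be a reachability game with inference mechanism η. For every hypergame state v = (s, X) ∈ V2 with s ∉ Win1(A1), there exists a perceptually permissive action b ∈ M_X(s) such that T(s, b) ∉ Win1(A1). Consequently, DPre2(Win1(A1) × 2^{A1}) ⊆ Win1(A1) × 2^{A1}. -/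
lemma attr_mono_k {S A B : Type} (G : RGame S A B) (X : Set A) :
    Monotone (G.attr X) := by
  apply monotone_nat_of_le_succ
  intro k
  intro s hs
  exact Or.inl (Or.inl hs)

lemma attr_mono_X {S A B : Type} (G : RGame S A B) {X Y : Set A} (h : X ⊆ Y) :
    ∀ k, G.attr X k ⊆ G.attr Y k := by
  intro k
  induction k with
  | zero => exact le_rfl
  | succ k ih =>
    rintro s ((hs | ⟨h1, a, ha, hta⟩) | ⟨h1, hb⟩)
    · exact Or.inl (Or.inl (ih hs))
    · exact Or.inl (Or.inr ⟨h1, a, h ha, ih hta⟩)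
    · exact Or.inr ⟨h1, fun b => ih (hb b)⟩

lemma win1_mono {S A B : Type} (G : RGame S A B) {X Y : Set A} (h : X ⊆ Y) :
    G.Win1 X ⊆ G.Win1 Y := by
  intro s hs
  obtain ⟨k, hk⟩ := Set.mem_iUnion.mp hs
  exact Set.mem_iUnion.mpr ⟨k, attr_mono_X G h k hk⟩

/-- **Case II of Theorem 1.**
For every hypergame state `v = (s, X) ∈ V2` with `s ∉ Win1(A1)`, there is a
perceptually permissive action `b ∈ M_X(s)` with `T(s,b) ∉ Win1(A1)`.
Consequently, `DPre2(Win1(A1) × 2^{A1}) ⊆ Win1(A1) × 2^{A1}`. -/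
theorem dpre2_of_win1_subset
    (S A B : Type) [Fintype S] [Fintype A] [Fintype B] [Nonempty A] [Nonempty B]
    (G : RGame S A B) (η : Set A → A → Set A)
    (hη : ∀ (X : Set A) (a : A), a ∈ η X a) :
    (∀ v : S × Set A, ¬ G.isP1 v.1 → v.1 ∉ G.Win1 Set.univ →
        ∃ b ∈ G.Mperm v.2 v.1, G.T2 v.1 b ∉ G.Win1 Set.univ) ∧
      G.DPre2 {v : S × Set A | v.1 ∈ G.Win1 Set.univ} ⊆
        {v : S × Set A | v.1 ∈ G.Win1 Set.univ} := by
  have key : ∀ v : S × Set A, ¬ G.isP1 v.1 → v.1 ∉ G.Win1 Set.univ →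
      ∃ b ∈ G.Mperm v.2 v.1, G.T2 v.1 b ∉ G.Win1 Set.univ := by
    rintro ⟨s, X⟩ hP1 hw
    by_contra h
    push_neg at h
    -- every b has T2 s b ∈ Win1 univ
    have hb : ∀ b : B, G.T2 s b ∈ G.Win1 Set.univ := by
      intro b
      by_contra hbw
      have hmem : b ∈ G.Mperm X s := fun hx => hbw (win1_mono G (Set.subset_univ X) hx)
      exact hbw (h b hmem)
    -- choose level for each b
    choose f hf using fun b => Set.mem_iUnion.mp (hb b)
    have hBne : Nonempty B := inferInstance
    set K := Finset.univ.sup f with hK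
    have : s ∈ G.attr Set.univ (K + 1) := by
      exact Or.inr ⟨hP1, fun b =>
        attr_mono_k G Set.univ (Finset.le_sup (Finset.mem_univ b)) (hf b)⟩
    exact hw (Set.mem_iUnion.mpr ⟨K + 1, this⟩)
  refine ⟨key, ?_⟩
  rintro ⟨s, X⟩ ⟨hP1, hall⟩
  by_contra hw
  obtain ⟨b, hbM, hbw⟩ := key (s, X) hP1 hw
  exact hbw (hall b hbM)
end

section
/- (Lemma: P1 can stay within each DASW iterate.) Let G be a reachability game with inference mechanism η, and assume final states are absorbing. Then for every k ≥ 0 the DASW iterate Z_k is closed under the deceptive dynamics: Z_k ⊆ DAPre1^1(Z_k) ∪ DAPre^2(Z_k). That is, every P1 hypergame state v ∈ Z_k ∩ V1 has an action a ∈ A1 with Δ(v,a) ∈ Z_k, and every P2 hypergame state v ∈ Z_k ∩ V2 satisfies Δ(v,b) ∈ Z_k for every perceptually permissive action b ∈ M(v). Hence P1 has a strategy to restrict the game indefinitely within Z_k against any perceptually permissive P2 behavior. -/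
section Aux
variable {S A B : Type}

lemma attr_mem_win1 (G : RGame S A B) (k : ℕ) (s : S) (h : s ∈ G.attr Set.univ k) :
    s ∈ G.Win1 Set.univ := Set.mem_iUnion.2 ⟨k, h⟩

lemma attr_p1 (G : RGame S A B) (habs : G.Absorbing) [Nonempty A] :
    ∀ k (s : S), s ∈ G.attr Set.univ k → G.isP1 s → ∃ a, G.T1 s a ∈ G.Win1 Set.univ := by
  intro k
  induction k with
  | zero =>
    intro s hs _
    obtain ⟨a⟩ := ‹Nonempty A›
    exact ⟨a, attr_mem_win1 G 0 _ ((habs s hs).1 a)⟩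
  | succ k ih =>
    intro s hs h1
    rcases hs with (hs | ⟨_, a, _, ha⟩) | hs
    · exact ih s hs h1
    · exact ⟨a, attr_mem_win1 G k _ ha⟩
    · exact absurd h1 hs.1

lemma attr_p2 (G : RGame S A B) (habs : G.Absorbing) :
    ∀ k (s : S), s ∈ G.attr Set.univ k → ¬ G.isP1 s → ∀ b, G.T2 s b ∈ G.Win1 Set.univ := by
  intro k
  induction k with
  | zero =>
    intro s hs _ b
    exact attr_mem_win1 G 0 _ ((habs s hs).2 b)
  | succ k ih =>
    intro s hs h2 b
    rcases hs with (hs | hs) | hs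
    · exact ih s hs h2 b
    · exact absurd hs.1 h2
    · exact attr_mem_win1 G k _ (hs.2 b)

lemma dpre1_mono (G : RGame S A B) (η : Set A → A → Set A) {U V : Set (S × Set A)}
    (h : U ⊆ V) : G.DPre1 η U ⊆ G.DPre1 η V := by
  rintro v ⟨h1, a, ha⟩; exact ⟨h1, a, h ha⟩

lemma dpre2_mono (G : RGame S A B) {U V : Set (S × Set A)}
    (h : U ⊆ V) : G.DPre2 U ⊆ G.DPre2 V := by
  rintro v ⟨h1, hb⟩; exact ⟨h1, fun b hbm => h (hb b hbm)⟩

lemma safe1_closed (G : RGame S A B) (η : Set A → A → Set A) (U : Set (S × Set A)) :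
    G.Safe1 η U ⊆ G.DPre1 η (G.Safe1 η U) ∪ G.DPre2 (G.Safe1 η U) := by
  intro v hv
  obtain ⟨Y, hY, hvY⟩ := hv
  have hYsub : Y ⊆ G.Safe1 η U := fun x hx => ⟨Y, hY, hx⟩
  rcases hY.2 hvY with h | h
  · exact Or.inl (dpre1_mono G η hYsub h)
  · exact Or.inr (dpre2_mono G hYsub h)

end Aux
/-- **Lemma: P1 can stay within each DASW iterate.**
If final states are absorbing, then every DASW iterate `Z_k` is closed
under the deceptive dynamics: `Z_k ⊆ DAPre1^1(Z_k) ∪ DAPre^2(Z_k)`, i.e.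
every P1 state in `Z_k` has an action staying in `Z_k` and every P2 state
in `Z_k` stays in `Z_k` under every perceptually permissive action. -/
theorem zda_closed
    (S A B : Type) [Fintype S] [Fintype A] [Fintype B] [Nonempty A] [Nonempty B]
    (G : RGame S A B) (η : Set A → A → Set A)
    (hη : ∀ (X : Set A) (a : A), a ∈ η X a)
    (habs : G.Absorbing) :
    ∀ k : ℕ, G.Zda η k ⊆ G.DPre1 η (G.Zda η k) ∪ G.DPre2 (G.Zda η k) := by
  intro k
  cases k with
  | zero =>
    intro v hv
    simp only [RGame.Zda] at hv
    obtain ⟨_, ⟨j, rfl⟩, hj⟩ := hv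
    by_cases h1 : G.isP1 v.1
    · obtain ⟨a, ha⟩ := attr_p1 G habs j v.1 hj h1
      obtain ⟨i, hi⟩ := Set.mem_iUnion.1 ha
      exact Or.inl ⟨h1, a, Set.mem_iUnion.2 ⟨i, hi⟩⟩
    · refine Or.inr ⟨h1, fun b _ => ?_⟩
      exact attr_p2 G habs j v.1 hj h1 b
  | succ k =>
    exact safe1_closed G η _
end

section
/- (Lemma: progressive paths toward lower DASW iterates.) Let G be a reachability game with inference mechanism η. For every k ≥ 0 and every hypergame state v ∈ V \ C_k, where C_k = Safe2(V \ Z_k), there exists a finite sequence v = v_0, v_1, ..., v_n with v_n ∈ Z_k such that for each i < n: if v_i ∈ V1 then v_{i+1} = Δ(v_i, a) for some a ∈ A1, and if v_i ∈ V2 then v_{i+1} = Δ(v_i, b) for some perceptually permissive action b ∈ M(v_i). In particular, from every state newly added to Z_{k+1}, the set Z_k can be reached along hypergame transitions compatible with perceptually permissive P2 actions. -/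
/-- **Lemma: progressive paths toward lower DASW iterates.**
For every `k` and every hypergame state `v ∈ V \ C_k` (with
`C_k = Safe2(V \ Z_k)`), there is a finite sequence `v = v_0, …, v_n` with
`v_n ∈ Z_k` in which P1 states move by some `a ∈ A1` and P2 states move by
some perceptually permissive `b ∈ M(v_i)`. -/
theorem progressive_path_to_Zda
    (S A B : Type) [Fintype S] [Fintype A] [Fintype B] [Nonempty A] [Nonempty B]
    (G : RGame S A B) (η : Set A → A → Set A)
    (hη : ∀ (X : Set A) (a : A), a ∈ η X a) :
    ∀ k : ℕ, ∀ v : S × Set A, v ∉ G.Cda η k →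
      ∃ (n : ℕ) (ρ : ℕ → S × Set A), ρ 0 = v ∧ ρ n ∈ G.Zda η k ∧
        ∀ i < n,
          (G.isP1 (ρ i).1 ∧ ∃ a : A, ρ (i + 1) = G.delta1 η (ρ i) a) ∨
          (¬ G.isP1 (ρ i).1 ∧ ∃ b ∈ G.M (ρ i), ρ (i + 1) = G.delta2 (ρ i) b) := by
  classical
  intro k v hv
  set Step : (S × Set A) → (S × Set A) → Prop := fun w w' =>
    (G.isP1 w.1 ∧ ∃ a : A, w' = G.delta1 η w a) ∨
    (¬ G.isP1 w.1 ∧ ∃ b ∈ G.M w, w' = G.delta2 w b) with hStep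
  set R : Set (S × Set A) :=
    {w | ∃ (n : ℕ) (ρ : ℕ → S × Set A), ρ 0 = w ∧ ρ n ∈ G.Zda η k ∧
      ∀ i < n, Step (ρ i) (ρ (i+1))} with hRdef
  have hZR : G.Zda η k ⊆ R := fun w hw => ⟨0, fun _ => w, rfl, hw, by omega⟩
  have hstep : ∀ w w', Step w w' → w' ∈ R → w ∈ R := by
    rintro w w' hS ⟨n, ρ, h0, hn, hsteps⟩
    refine ⟨n + 1, fun i => Nat.rec w (fun j _ => ρ j) i, rfl, hn, ?_⟩
    intro i hi
    match i with
    | 0 =>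
      show Step w (ρ 0)
      rw [h0]; exact hS
    | j + 1 => exact hsteps j (by omega)
  suffices hvR : v ∈ R by
    obtain ⟨n, ρ, h0, hn, hsteps⟩ := hvR
    exact ⟨n, ρ, h0, hn, hsteps⟩
  by_contra hvR
  apply hv
  refine Set.mem_sUnion.mpr ⟨Rᶜ, ⟨?_, ?_⟩, hvR⟩
  · intro w hw
    exact fun hwz => hw (hZR hwz)
  · intro w hw
    by_cases hP1 : G.isP1 w.1
    · left
      refine ⟨hP1, fun a h1 => hw (hstep w _ (Or.inl ⟨hP1, a, rfl⟩) h1)⟩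
    · right
      refine ⟨hP1, fun b hb h1 => hw (hstep w _ (Or.inr ⟨hP1, b, hb, rfl⟩) h1)⟩
end

section
/- (Corollary: the DASW iterates are increasing.) Let G be a reachability game with inference mechanism η, and assume final states are absorbing. Then for every k ≥ 0, the DASW iterates satisfy Z_k ⊆ Z_{k+1}. -/
lemma safe1_mono' {S A B : Type} (G : RGame S A B) (η : Set A → A → Set A)
    {U U' : Set (S × Set A)} (h : U ⊆ U') : G.Safe1 η U ⊆ G.Safe1 η U' :=
  Set.sUnion_subset_sUnion fun _ hY => ⟨hY.1.trans h, hY.2⟩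

lemma safe2_mono' {S A B : Type} (G : RGame S A B) (η : Set A → A → Set A)
    {U U' : Set (S × Set A)} (h : U ⊆ U') : G.Safe2 η U ⊆ G.Safe2 η U' :=
  Set.sUnion_subset_sUnion fun _ hY => ⟨hY.1.trans h, hY.2⟩

lemma attr_mem_win1' {S A B : Type} [Nonempty A] (G : RGame S A B)
    (habs : G.Absorbing) :
    ∀ k s, s ∈ G.attr Set.univ k →
      (G.isP1 s → ∃ a, G.T1 s a ∈ G.Win1 Set.univ) ∧
      (¬ G.isP1 s → ∀ b, G.T2 s b ∈ G.Win1 Set.univ) := by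
  intro k
  induction k with
  | zero =>
    intro s hs
    obtain ⟨h1, h2⟩ := habs s hs
    exact ⟨fun _ => ⟨Classical.arbitrary A, Set.mem_iUnion.2 ⟨0, h1 _⟩⟩,
      fun _ b => Set.mem_iUnion.2 ⟨0, h2 b⟩⟩
  | succ k ih =>
    intro s hs
    rcases hs with (hs | hs) | hs
    · exact ih s hs
    · obtain ⟨hp, a, -, ha⟩ := hs
      exact ⟨fun _ => ⟨a, Set.mem_iUnion.2 ⟨k, ha⟩⟩, fun hn => absurd hp hn⟩
    · exact ⟨fun hp => absurd hp hs.1, fun _ b => Set.mem_iUnion.2 ⟨k, hs.2 b⟩⟩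

/-- **Corollary: the DASW iterates are increasing.**
If final states are absorbing, then `Z_k ⊆ Z_{k+1}` for every `k`. -/
theorem zda_monotone
    (S A B : Type) [Fintype S] [Fintype A] [Fintype B] [Nonempty A] [Nonempty B]
    (G : RGame S A B) (η : Set A → A → Set A)
    (hη : ∀ (X : Set A) (a : A), a ∈ η X a)
    (habs : G.Absorbing) :
    ∀ k : ℕ, G.Zda η k ⊆ G.Zda η (k + 1) := by
  intro k
  induction k with
  | zero =>
    intro v hv
    refine Set.mem_sUnion.2 ⟨{v | v.1 ∈ G.Win1 Set.univ}, ⟨?_, ?_⟩, hv⟩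
    · intro w hw hw'
      obtain ⟨Y, ⟨hY1, -⟩, hwY⟩ := hw'
      exact hY1 hwY hw
    · intro w hw
      obtain ⟨j, hj⟩ := Set.mem_iUnion.1 hw
      by_cases hp : G.isP1 w.1
      · obtain ⟨a, ha⟩ := (attr_mem_win1' G habs j w.1 hj).1 hp
        exact Or.inl ⟨hp, a, ha⟩
      · exact Or.inr ⟨hp, fun b _ => (attr_mem_win1' G habs j w.1 hj).2 hp b⟩
  | succ k ih =>
    exact safe1_mono' G η (Set.compl_subset_compl.2
      (safe2_mono' G η (Set.compl_subset_compl.2 ih)))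
end

section
/- (The P2-enforceable regions shrink along the DASW iteration.) Let G be a reachability game with inference mechanism η, and assume final states are absorbing. Then for every k ≥ 0, the sets C_k = Safe2(V \ Z_k) satisfy C_{k+1} ⊆ C_k. -/
namespace RGame

variable {S A B : Type}

lemma mem_win1' (G : RGame S A B) {X : Set A} {s : S} {k : ℕ} (h : s ∈ G.attr X k) :
    s ∈ G.Win1 X := Set.mem_iUnion.2 ⟨k, h⟩

lemma win1_step (G : RGame S A B) [Nonempty A] (habs : G.Absorbing) {s : S}
    (h : s ∈ G.Win1 Set.univ) :
    (G.isP1 s → ∃ a, G.T1 s a ∈ G.Win1 Set.univ) ∧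
      (¬ G.isP1 s → ∀ b, G.T2 s b ∈ G.Win1 Set.univ) := by
  obtain ⟨k, hk⟩ := Set.mem_iUnion.1 h
  clear h
  induction k with
  | zero =>
    have hF : s ∈ G.F := hk
    constructor
    · intro _
      exact ⟨Classical.arbitrary A, G.mem_win1' (k := 0) ((habs s hF).1 _)⟩
    · intro _ b
      exact G.mem_win1' (k := 0) ((habs s hF).2 b)
  | succ k ih =>
    rcases hk with (hk | hk) | hk
    · exact ih hk
    · obtain ⟨h1, a, _, ha⟩ := hk
      exact ⟨fun _ => ⟨a, G.mem_win1' ha⟩, fun h2 => absurd h1 h2⟩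
    · exact ⟨fun h1 => absurd h1 hk.1, fun _ b => G.mem_win1' (hk.2 b)⟩

lemma dpre1_mono (G : RGame S A B) (η : Set A → A → Set A) {U U' : Set (S × Set A)}
    (h : U ⊆ U') : G.DPre1 η U ⊆ G.DPre1 η U' :=
  fun _ hv => ⟨hv.1, hv.2.choose, h hv.2.choose_spec⟩

lemma dpre2_mono (G : RGame S A B) {U U' : Set (S × Set A)}
    (h : U ⊆ U') : G.DPre2 U ⊆ G.DPre2 U' :=
  fun _ hv => ⟨hv.1, fun b hb => h (hv.2 b hb)⟩

lemma safe1_subset (G : RGame S A B) (η : Set A → A → Set A) (U : Set (S × Set A)) :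
    G.Safe1 η U ⊆ U := by
  intro v hv
  obtain ⟨Y, ⟨hYU, _⟩, hvY⟩ := hv
  exact hYU hvY

lemma safe1_post (G : RGame S A B) (η : Set A → A → Set A) (U : Set (S × Set A)) :
    G.Safe1 η U ⊆ G.DPre1 η (G.Safe1 η U) ∪ G.DPre2 (G.Safe1 η U) := by
  intro v hv
  obtain ⟨Y, hY, hvY⟩ := hv
  have hsub : Y ⊆ G.Safe1 η U := Set.subset_sUnion_of_mem hY
  rcases hY.2 hvY with h | h
  · exact Or.inl (G.dpre1_mono η hsub h)
  · exact Or.inr (G.dpre2_mono hsub h)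

lemma le_safe1 (G : RGame S A B) (η : Set A → A → Set A) {U Y : Set (S × Set A)}
    (hYU : Y ⊆ U) (hYp : Y ⊆ G.DPre1 η Y ∪ G.DPre2 Y) : Y ⊆ G.Safe1 η U :=
  Set.subset_sUnion_of_mem ⟨hYU, hYp⟩

lemma safe2_subset (G : RGame S A B) (η : Set A → A → Set A) (U : Set (S × Set A)) :
    G.Safe2 η U ⊆ U := by
  intro v hv
  obtain ⟨Y, ⟨hYU, _⟩, hvY⟩ := hv
  exact hYU hvY

lemma safe2_mono (G : RGame S A B) (η : Set A → A → Set A) {U U' : Set (S × Set A)}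
    (h : U ⊆ U') : G.Safe2 η U ⊆ G.Safe2 η U' := by
  intro v hv
  obtain ⟨Y, ⟨hYU, hYp⟩, hvY⟩ := hv
  exact ⟨Y, ⟨hYU.trans h, hYp⟩, hvY⟩

lemma zda_post (G : RGame S A B) [Nonempty A] (η : Set A → A → Set A)
    (habs : G.Absorbing) (k : ℕ) :
    G.Zda η k ⊆ G.DPre1 η (G.Zda η k) ∪ G.DPre2 (G.Zda η k) := by
  cases k with
  | zero =>
    intro v hv
    have hw := G.win1_step habs hv
    by_cases h1 : G.isP1 v.1
    · obtain ⟨a, ha⟩ := hw.1 h1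
      exact Or.inl ⟨h1, a, ha⟩
    · exact Or.inr ⟨h1, fun b _ => hw.2 h1 b⟩
  | succ k => exact G.safe1_post η _

lemma zda_mono (G : RGame S A B) [Nonempty A] (η : Set A → A → Set A)
    (habs : G.Absorbing) (k : ℕ) : G.Zda η k ⊆ G.Zda η (k + 1) := by
  apply G.le_safe1 η ?_ (G.zda_post η habs k)
  intro v hv hvc
  exact (G.safe2_subset η _ hvc) hv

end RGame

/-- **The P2-enforceable regions shrink along the DASW
iteration.** If final states are absorbing, then `C_{k+1} ⊆ C_k` for
every `k`, where `C_k = Safe2(V \ Z_k)`. -/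
theorem cda_antitone
    (S A B : Type) [Fintype S] [Fintype A] [Fintype B] [Nonempty A] [Nonempty B]
    (G : RGame S A B) (η : Set A → A → Set A)
    (hη : ∀ (X : Set A) (a : A), a ∈ η X a)
    (habs : G.Absorbing) :
    ∀ k : ℕ, G.Cda η (k + 1) ⊆ G.Cda η k := fun k =>
  G.safe2_mono η (Set.compl_subset_compl.2 (G.zda_mono η habs k))
end

section
/- (Theorem: action deception can be advantageous under the almost-sure winning condition.) There exist a reachability game G = (S, S1, S2, A1, A2, T, F) with absorbing final states, an inference mechanism η, a perception X0 ⊆ A1, and a state s ∈ S such that s ∉ Win1(A1) but (s, X0) ∈ DAWin1 = ⋃_k Z_k, the limit of the DASW iteration. (A witness is the four-state game with S = {s0, s1, s2, s3}, S1 = {s1, s3}, S2 = {s0, s2}, A1 = {a1, a2}, A2 = {b1, b2}, F = {s0}, transitions T(s1,a1)=s0, T(s1,a2)=s2, T(s2,b1)=s1, T(s2,b2)=s3, T(s3,a1)=s2, T(s3,a2)=s2, all transitions from s0 to s0, the inference mechanism η(X,a) = X ∪ {a}, the perception X0 = {a2}, and the state s = s2.) -/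
/-- The witness game. -/
def Gex : RGame (Fin 4) (Fin 2) (Fin 2) where
  isP1 s := s = 1 ∨ s = 3
  T1 s a := ![![0, 0], ![0, 2], ![2, 2], ![2, 2]] s a
  T2 s b := ![![0, 0], ![1, 1], ![1, 3], ![3, 3]] s b
  F := {0}

lemma Gex_not_isP1_two : ¬ Gex.isP1 2 := by
  intro h; rcases h with h | h <;> exact absurd h (by decide)

lemma Gex_not_isP1_zero : ¬ Gex.isP1 0 := by
  intro h; rcases h with h | h <;> exact absurd h (by decide)

lemma Gex_attr_univ_sub (k : ℕ) :
    Gex.attr Set.univ k ⊆ {s | s = 0 ∨ s = 1} := by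
  induction k with
  | zero => intro s hs; exact Or.inl hs
  | succ k ih =>
    intro s hs
    rcases hs with (hs | ⟨h1, a, -, ha⟩) | ⟨h2, hb⟩
    · exact ih hs
    · rcases h1 with rfl | rfl
      · exact Or.inr rfl
      · exfalso
        have h2 : Gex.T1 3 a = 2 := by fin_cases a <;> rfl
        rcases ih ha with h | h <;> rw [h2] at h <;> exact absurd h (by decide)
    · -- P2 states: s = 0 or s = 2
      fin_cases s
      · exact Or.inl rfl
      · exact absurd (Or.inl rfl) h2
      · exfalso
        exact absurd (ih (hb 1)) (by decide)
      · exact absurd (Or.inr rfl) h2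

lemma Gex_two_not_win : (2 : Fin 4) ∉ Gex.Win1 Set.univ := by
  intro h
  rcases Set.mem_iUnion.mp h with ⟨k, hk⟩
  rcases Gex_attr_univ_sub k hk with h | h <;> exact absurd h (by decide)

lemma Gex_zero_win : (0 : Fin 4) ∈ Gex.Win1 Set.univ :=
  Set.mem_iUnion.mpr ⟨0, rfl⟩

lemma Gex_one_win : (1 : Fin 4) ∈ Gex.Win1 Set.univ := by
  refine Set.mem_iUnion.mpr ⟨1, ?_⟩
  refine Or.inl (Or.inr ⟨Or.inl rfl, 0, Set.mem_univ _, ?_⟩)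
  show Gex.T1 1 0 ∈ Gex.F
  rfl

lemma Gex_attr_X0_sub (k : ℕ) :
    Gex.attr ({1} : Set (Fin 2)) k ⊆ {s | s = 0} := by
  induction k with
  | zero => intro s hs; exact hs
  | succ k ih =>
    intro s hs
    rcases hs with (hs | ⟨h1, a, haX, ha⟩) | ⟨h2, hb⟩
    · exact ih hs
    · exfalso
      have haX' : a = 1 := haX
      subst haX'
      have hT : Gex.T1 s 1 = 2 := by rcases h1 with rfl | rfl <;> rfl
      rw [hT] at ha
      exact absurd (ih ha) (by decide)
    · fin_cases s
      · rfl
      · exact absurd (Or.inl rfl) h2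
      · exfalso
        exact absurd (ih (hb 0)) (by decide)
      · exact absurd (Or.inr rfl) h2

lemma Gex_one_not_winX0 : (1 : Fin 4) ∉ Gex.Win1 ({1} : Set (Fin 2)) := by
  intro h
  rcases Set.mem_iUnion.mp h with ⟨k, hk⟩
  exact absurd (Gex_attr_X0_sub k hk) (by decide)

/-- **Theorem: action deception can be advantageous under the
almost-sure winning condition.** There exist a reachability game with
absorbing final states, an inference mechanism `η`, a perception `X0`, and a
state `s ∉ Win1(A1)` such that `(s, X0) ∈ DAWin1`. (A witness is the
four-state game of the running example with `η(X,a) = X ∪ {a}`,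
`X0 = {a2}`, `s = s2`.) -/

theorem deception_advantageous_almost_sure :
    ∃ (G : RGame (Fin 4) (Fin 2) (Fin 2))
      (η : Set (Fin 2) → Fin 2 → Set (Fin 2))
      (X0 : Set (Fin 2)) (s : Fin 4),
      (∀ (X : Set (Fin 2)) (a : Fin 2), a ∈ η X a) ∧
      G.Absorbing ∧
      s ∉ G.Win1 Set.univ ∧
      (s, X0) ∈ G.DAWin1 η := by
  set X0 : Set (Fin 2) := {1} with hX0
  refine ⟨Gex, fun X a => X ∪ {a}, X0, 2, ?_, ?_, Gex_two_not_win, ?_⟩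
  · intro X a; exact Or.inr rfl
  · intro s hs
    have hs0 : s = 0 := hs
    subst hs0
    constructor
    · intro a; fin_cases a <;> rfl
    · intro b; fin_cases b <;> rfl
  · -- (2, X0) ∈ DAWin1, via Zda 1
    -- The key "not in Safe2" lemma
    have hU : ∀ Y' : Set (Fin 4 × Set (Fin 2)),
        Y' ⊆ (Gex.Zda (fun X a => X ∪ {a}) 0)ᶜ →
        Y' ⊆ Gex.DAPre21 (fun X a => X ∪ {a}) Y' ∪ Gex.DPre2 Y' →
        ((2 : Fin 4), X0) ∉ Y' := by
      intro Y' hYU hYfix h2mem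
      rcases hYfix h2mem with hd | hd
      · exact absurd hd.1 Gex_not_isP1_two
      · have hM : (0 : Fin 2) ∈ Gex.M ((2 : Fin 4), X0) := Gex_one_not_winX0
        have h1mem : ((1 : Fin 4), X0) ∈ Y' := hd.2 0 hM
        exact hYU h1mem Gex_one_win
    have key : ((2 : Fin 4), X0) ∈ Gex.Zda (fun X a => X ∪ {a}) 1 := by
      show ((2 : Fin 4), X0) ∈
        Gex.Safe1 (fun X a => X ∪ {a})
          (Gex.Safe2 (fun X a => X ∪ {a}) (Gex.Zda (fun X a => X ∪ {a}) 0)ᶜ)ᶜ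
      refine Set.mem_sUnion.mpr
        ⟨{((2 : Fin 4), X0), ((1 : Fin 4), X0), ((3 : Fin 4), X0),
          ((0 : Fin 4), X0 ∪ {0})}, ⟨?_, ?_⟩, Or.inl rfl⟩
      · -- Y ⊆ (Safe2 U)ᶜ
        intro v hv
        intro hvS
        rcases Set.mem_sUnion.mp hvS with ⟨Y', ⟨hYU, hYfix⟩, hvY'⟩
        rcases hv with rfl | rfl | rfl | rfl
        · exact hU Y' hYU hYfix hvY'
        · exact hYU hvY' Gex_one_win
        · -- (3, X0): must be DAPre21, gives (2, X0) ∈ Y'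
          rcases hYfix hvY' with hd | hd
          · have h2 : ((2 : Fin 4), X0) ∈ Y' := by
              have := hd.2 1
              have he : Gex.delta1 (fun X a => X ∪ {a}) ((3 : Fin 4), X0) 1
                  = ((2 : Fin 4), X0) := by
                show ((Gex.T1 3 1 : Fin 4), X0 ∪ {1}) = ((2 : Fin 4), X0)
                rw [hX0, Set.union_self]
                rfl
              rwa [he] at this
            exact hU Y' hYU hYfix h2
          · exact absurd (Or.inr rfl) hd.1
        · exact hYU hvY' Gex_zero_win
      · -- Y ⊆ DPre1 Y ∪ DPre2 Y
        intro v hv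
        rcases hv with rfl | rfl | rfl | rfl
        · refine Or.inr ⟨Gex_not_isP1_two, ?_⟩
          intro b hb
          fin_cases b
          · exact Or.inr (Or.inl rfl)
          · exact Or.inr (Or.inr (Or.inl rfl))
        · refine Or.inl ⟨Or.inl rfl, 0, ?_⟩
          exact Or.inr (Or.inr (Or.inr rfl))
        · refine Or.inl ⟨Or.inr rfl, 1, ?_⟩
          have he : Gex.delta1 (fun X a => X ∪ {a}) ((3 : Fin 4), X0) 1
              = ((2 : Fin 4), X0) := by
            show ((Gex.T1 3 1 : Fin 4), X0 ∪ {1}) = ((2 : Fin 4), X0)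
            rw [hX0, Set.union_self]
            rfl
          rw [he]
          exact Or.inl rfl
        · refine Or.inr ⟨Gex_not_isP1_zero, ?_⟩
          intro b hb
          have he : Gex.delta2 ((0 : Fin 4), X0 ∪ {0}) b
              = ((0 : Fin 4), X0 ∪ {0}) := by
            fin_cases b <;> rfl
          rw [he]
          exact Or.inr (Or.inr (Or.inr rfl))
    exact Set.mem_iUnion.mpr ⟨1, key⟩
end
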